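/- Let U be unitary and ΔU a perturbation. Then (U + ΔU)[(U + ΔU)†(U + ΔU)]^{-1/2} = U + (1/2)(ΔU − U ΔU† U) + O(‖ΔU‖²); i.e., to first order in ΔU, the polar projection of U + ΔU equals U plus the tangent-space projection of ΔU. -/

import Mathlib

open Matrix Asymptotics
open scoped ComplexOrder Topology

attribute [local instance] Matrix.frobeniusNormedAddCommGroup

/-- The positive semidefinite square root of a positive semidefinite matrix (removed from
Mathlib; restored here with its former definition). -/
noncomputable def Matrix.PosSemidef.sqrt {n 𝕜 : Type*} [Fintype n] [RCLike 𝕜] [DecidableEq n]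
    {A : Matrix n n 𝕜} (hA : A.PosSemidef) : Matrix n n 𝕜 :=
  hA.1.eigenvectorUnitary.1 * diagonal ((↑) ∘ (√·) ∘ hA.1.eigenvalues) *
    (star hA.1.eigenvectorUnitary : Matrix n n 𝕜)

/-!
Write `A = U + Δ`, `S = (AᴴA)^{1/2}` and `T = S - 1`. For `S ⪰ 0` the Frobenius norm of `T` is
at most that of `S² - 1 = AᴴA - UᴴU = O(Δ)`, so `S → 1` and `S⁻¹` stays bounded. Expanding
`S⁻¹ = 1 - T + T²S⁻¹` and `2T = S² - 1 - T²` and using `UUᴴ = 1`, the remainder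
`AS⁻¹ - U - ½(Δ - UΔᴴU)` is exactly `½U(T² - ΔᴴΔ) - ΔT + AT²S⁻¹`, which is `O(‖Δ‖²)`.
-/

open Filter

theorem polar_remainder_eq {𝕜 R : Type*} [Field 𝕜] [CharZero 𝕜] [Ring R] [StarRing R]
    [Algebra 𝕜 R] {U Δ S V : R} (hU : U * star U = 1) (hS : S * S = star (U + Δ) * (U + Δ))
    (hV : S * V = 1) :
    (U + Δ) * V - (U + (1 / 2 : 𝕜) • (Δ - U * star Δ * U)) =
      (1 / 2 : 𝕜) • (U * ((S - 1) * (S - 1) - star Δ * Δ)) - Δ * (S - 1)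
        + (U + Δ) * ((S - 1) * (S - 1)) * V := by
  have hTTV : (S - 1) * (S - 1) * V = S - 2 + V := by
    have : (S - 1) * (S - 1) * V = S * (S * V) - 2 * (S * V) + V := by noncomm_ring
    rw [this, hV, mul_one, mul_one]
  have hUSS : U * (S * S) = U + Δ + U * star Δ * U + U * star Δ * Δ := by
    rw [hS, star_add]
    simp only [add_mul, mul_add, ← mul_assoc, hU, one_mul]
    abel
  have hUTT : U * ((S - 1) * (S - 1)) = U * (S * S) - 2 * (U * S) + U := by noncomm_ring
  rw [mul_assoc (U + Δ), hTTV, mul_sub U, hUTT, hUSS]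
  simp only [add_mul, mul_add, sub_eq_add_neg, mul_neg, neg_add, smul_add, smul_neg,
    mul_assoc, mul_one, two_mul, mul_two]
  module

namespace Matrix

section PosSemidef

variable {n 𝕜 : Type*} [Fintype n] [RCLike 𝕜] [DecidableEq n] {A : Matrix n n 𝕜}

lemma PosSemidef.posSemidef_sqrt (hA : A.PosSemidef) : hA.sqrt.PosSemidef := by
  have hD : (diagonal ((↑) ∘ (√·) ∘ hA.1.eigenvalues) : Matrix n n 𝕜).PosSemidef :=
    posSemidef_diagonal_iff.mpr fun i => by simp [Real.sqrt_nonneg]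
  simpa [Matrix.PosSemidef.sqrt, star_eq_conjTranspose] using
    hD.mul_mul_conjTranspose_same hA.1.eigenvectorUnitary.1

lemma PosSemidef.sqrt_mul_self (hA : A.PosSemidef) : hA.sqrt * hA.sqrt = A := by
  have hu : (star hA.1.eigenvectorUnitary : Matrix n n 𝕜) * hA.1.eigenvectorUnitary.1 = 1 :=
    Unitary.coe_star_mul_self _
  have hD : (diagonal ((↑) ∘ (√·) ∘ hA.1.eigenvalues) : Matrix n n 𝕜) *
      diagonal ((↑) ∘ (√·) ∘ hA.1.eigenvalues) = diagonal (RCLike.ofReal ∘ hA.1.eigenvalues) := by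
    rw [diagonal_mul_diagonal]
    congr 1; funext i
    simp only [Function.comp_apply, ← RCLike.ofReal_mul,
      Real.mul_self_sqrt (hA.eigenvalues_nonneg i)]
  conv_rhs => rw [hA.1.spectral_theorem, Unitary.conjStarAlgAut_apply, ← hD]
  simp only [Matrix.PosSemidef.sqrt, Matrix.mul_assoc]
  rw [← Matrix.mul_assoc (star _ : Matrix n n 𝕜), hu, Matrix.one_mul]

end PosSemidef

theorem trace_conjTranspose_mul_self_eq_frobenius_norm_sq {m n 𝕜 : Type*} [Fintype m]
    [Fintype n] [RCLike 𝕜] (A : Matrix m n 𝕜) : (Aᴴ * A).trace = ((‖A‖ ^ 2 : ℝ) : 𝕜) := by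
  have hnorm : ‖A‖ ^ 2 = ∑ i, ∑ j, ‖A i j‖ ^ 2 := by
    rw [frobenius_norm_def, ← Real.rpow_natCast, ← Real.rpow_mul (by positivity)]
    norm_num
  rw [hnorm, trace, Finset.sum_comm]
  push_cast
  simp [mul_apply, RCLike.conj_mul]

theorem PosSemidef.frobenius_norm_sub_one_le {n 𝕜 : Type*} [Fintype n] [RCLike 𝕜]
    [DecidableEq n] {S : Matrix n n 𝕜} (hS : S.PosSemidef) : ‖S - 1‖ ≤ ‖S * S - 1‖ := by
  set T := S - 1
  have hT : Tᴴ = T := by simp [T, hS.1.eq]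
  have hE : (S * S - 1)ᴴ = S * S - 1 := by simp [hS.1.eq]
  -- `S² - 1 = T(S + 1)` and `(S + 1)² = 1 + (S² + 2S)` with `S² + 2S ⪰ 0`
  have hsq : (S * S - 1) * (S * S - 1) = T * T + T * (S * S + S + S) * T := by
    simp only [T]; noncomm_ring
  have hpos : (S * S + S + S).PosSemidef := by
    have := (posSemidef_conjTranspose_mul_self S).add (hS.add hS)
    rwa [hS.1.eq, ← add_assoc] at this
  have key : ((‖T‖ ^ 2 : ℝ) : 𝕜) ≤ ((‖S * S - 1‖ ^ 2 : ℝ) : 𝕜) := by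
    rw [← trace_conjTranspose_mul_self_eq_frobenius_norm_sq,
      ← trace_conjTranspose_mul_self_eq_frobenius_norm_sq, hT, hE, hsq, trace_add]
    have := (hpos.conjTranspose_mul_mul_same T).trace_nonneg
    rw [hT] at this
    exact le_add_of_nonneg_right this
  exact (pow_le_pow_iff_left₀ (norm_nonneg _) (norm_nonneg _) two_ne_zero).mp
    (RCLike.ofReal_le_ofReal.mp key)

section Asymptotics

variable {m 𝕜 : Type*} [Fintype m] [RCLike 𝕜]

theorem isBigO_conjTranspose_norm {n : Type*} [Fintype n] (l : Filter (Matrix m n 𝕜)) :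
    (fun Δ : Matrix m n 𝕜 => Δᴴ) =O[l] (fun Δ => ‖Δ‖) :=
  isBigO_of_le _ fun Δ => by simp [frobenius_norm_conjTranspose]

variable [DecidableEq m]

attribute [local instance] frobeniusNormedRing frobeniusNormedSpace

theorem isBigO_conjTranspose_mul_self_sub (U : Matrix m m 𝕜) :
    (fun Δ => (U + Δ)ᴴ * (U + Δ) - Uᴴ * U) =O[𝓝 0] (fun Δ => ‖Δ‖) := by
  have hΔ := (isBigO_refl (fun Δ : Matrix m m 𝕜 => Δ) (𝓝 0)).norm_right
  have hA : (fun Δ : Matrix m m 𝕜 => U + Δ) =O[𝓝 0] (fun _ => (1 : ℝ)) :=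
    (tendsto_const_nhds.add tendsto_id).isBigO_one ℝ
  have hΔH := isBigO_conjTranspose_norm (𝓝 (0 : Matrix m m 𝕜))
  refine (hΔ.const_mul_left Uᴴ).add ((hΔH.mul hA).congr_right fun Δ => mul_one ‖Δ‖)
    |>.congr_left fun Δ => ?_
  simp only [conjTranspose_add]
  noncomm_ring

theorem isBigO_sqrt_conjTranspose_mul_self_sub_one {U : Matrix m m 𝕜} (hU : Uᴴ * U = 1) :
    (fun Δ => (posSemidef_conjTranspose_mul_self (U + Δ)).sqrt - 1) =O[𝓝 0]
      (fun Δ => ‖Δ‖) := by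
  refine .trans (isBigO_of_le _ fun Δ => ?_) (isBigO_conjTranspose_mul_self_sub U)
  have hS := posSemidef_conjTranspose_mul_self (U + Δ)
  simpa [hU, hS.sqrt_mul_self] using hS.posSemidef_sqrt.frobenius_norm_sub_one_le

theorem tendsto_inv_of_tendsto_one {α : Type*} {l : Filter α} {S : α → Matrix m m 𝕜}
    (h : Tendsto S l (𝓝 1)) : Tendsto (fun x => (S x)⁻¹) l (𝓝 1) := by
  have hinv : ContinuousAt Inv.inv (1 : Matrix m m 𝕜) := by
    refine continuousAt_matrix_inv _ ?_
    simp only [det_one, Ring.inverse_eq_inv']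
    exact continuousAt_inv₀ one_ne_zero
  have := hinv.tendsto
  rw [inv_one] at this
  exact this.comp h

theorem eventually_mul_inv_eq_one {α : Type*} {l : Filter α} {S : α → Matrix m m 𝕜}
    (h : Tendsto S l (𝓝 1)) : ∀ᶠ x in l, S x * (S x)⁻¹ = 1 := by
  have hdet : Tendsto (fun x => (S x).det) l (𝓝 1) := by
    simpa [Function.comp_def] using (continuous_id.matrix_det.tendsto 1).comp h
  filter_upwards [hdet.eventually_ne one_ne_zero] with x hx
  exact mul_nonsing_inv _ (isUnit_iff_ne_zero.mpr hx)

theorem isBigO_polar_remainder (U : Matrix m m 𝕜) {S V : Matrix m m 𝕜 → Matrix m m 𝕜}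
    (hS : (fun Δ => S Δ - 1) =O[𝓝 0] (fun Δ => ‖Δ‖))
    (hV : V =O[𝓝 0] (fun _ => (1 : ℝ))) :
    (fun Δ => (1 / 2 : 𝕜) • (U * ((S Δ - 1) * (S Δ - 1) - Δᴴ * Δ)) - Δ * (S Δ - 1)
        + (U + Δ) * ((S Δ - 1) * (S Δ - 1)) * V Δ) =O[𝓝 0] (fun Δ => ‖Δ‖ ^ 2) := by
  have hΔ := (isBigO_refl (fun Δ : Matrix m m 𝕜 => Δ) (𝓝 0)).norm_right
  have hA : (fun Δ : Matrix m m 𝕜 => U + Δ) =O[𝓝 0] (fun _ => (1 : ℝ)) :=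
    (tendsto_const_nhds.add tendsto_id).isBigO_one ℝ
  have hΔH := isBigO_conjTranspose_norm (𝓝 (0 : Matrix m m 𝕜))
  have hTT := hS.mul hS
  have h₁ := ((hTT.sub (hΔH.mul hΔ)).const_mul_left U).const_smul_left (1 / 2 : 𝕜)
  have h₂ := hΔ.mul hS
  have h₃ := (hA.mul hTT).mul hV
  simp only [one_mul, mul_one] at h₃
  simpa only [sq, Pi.smul_apply] using (h₁.sub h₂).add h₃

end Asymptotics

end Matrix

/-- First-order expansion of the polar projection: for unitary `U`,
`(U + Δ)[(U + Δ)ᴴ(U + Δ)]^{-1/2} = U + (1/2)(Δ − U Δᴴ U) + o(‖Δ‖)` as `Δ → 0`. -/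
theorem polar_projection_first_order {n : ℕ}
    (U : Matrix (Fin n) (Fin n) ℂ) (hU : U ∈ Matrix.unitaryGroup (Fin n) ℂ) :
    (fun Δ : Matrix (Fin n) (Fin n) ℂ =>
        (U + Δ) * ((Matrix.posSemidef_conjTranspose_mul_self (U + Δ)).sqrt)⁻¹
          - (U + ((1 : ℂ)/2) • (Δ - U * Δᴴ * U)))
      =o[𝓝 0] (fun Δ : Matrix (Fin n) (Fin n) ℂ => Δ) := by
  set S := fun Δ : Matrix (Fin n) (Fin n) ℂ =>
    (Matrix.posSemidef_conjTranspose_mul_self (U + Δ)).sqrt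
  have hT : (fun Δ => S Δ - 1) =O[𝓝 0] (fun Δ => ‖Δ‖) :=
    isBigO_sqrt_conjTranspose_mul_self_sub_one (mem_unitaryGroup_iff'.mp hU)
  have hS : Tendsto S (𝓝 0) (𝓝 1) :=
    tendsto_sub_nhds_zero_iff.mp (hT.trans_tendsto tendsto_norm_zero)
  have hid : ∀ᶠ Δ in 𝓝 0, S Δ * (S Δ)⁻¹ = 1 := eventually_mul_inv_eq_one hS
  refine (isBigO_polar_remainder U hT ((tendsto_inv_of_tendsto_one hS).isBigO_one ℝ))
    |>.congr' (hid.mono fun Δ hΔ => ?_) .rfl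
    |>.trans_isLittleO (isLittleO_norm_pow_id one_lt_two)
  exact (polar_remainder_eq (mem_unitaryGroup_iff.mp hU)
    (posSemidef_conjTranspose_mul_self (U + Δ)).sqrt_mul_self hΔ).symm
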